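/- For surjections σ ∈ Surj_k, τ ∈ Surj_l (packed words), the operator composition satisfies F_σ ∘ F_τ = F_{σ∘τ} if max(τ) = k, and F_σ ∘ F_τ = 0 otherwise, where F_σ are the natural operators on T(V) for a commutative algebra V. -/
import Mathlib


open Finsupp

noncomputable section

variable (k : Type) [Field k] (V : Type)

/-- The free `k`-module on words with letters in `V` (a model of `T(V)`). -/
abbrev TW := List V →₀ k

variable {k V} in
def sg (w : List V) : TW k V := Finsupp.single w 1

/-- The maximum letter of a word over ℕ. -/
def maxOf (s : List ℕ) : ℕ := s.foldr max 0

/-- A packed word (surjection): a word over positive integers whose set of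
letters is `{1, …, max}`. -/
def IsPacked (s : List ℕ) : Prop :=
  (0 ∉ s) ∧ ∀ j : ℕ, 0 < j → j ≤ maxOf s → j ∈ s

variable [NonUnitalCommRing V] [Module k V]

/-- Product of a list of elements of `V` (junk value `0` on the empty list). -/
def prodList : List V → V
  | [] => 0
  | a :: t => t.foldl (· * ·) a

/-- `F_σ` on a word `x₁…x_l`: if `l` equals the length of `σ`, the word
`(∏_{σ(i)=1} x_i) ⋯ (∏_{σ(i)=max σ} x_i)` (products in `V`); `0` otherwise. -/
def FW (σ : List ℕ) (x : List V) : TW k V :=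
  if x.length = σ.length then
    sg ((List.range' 1 (maxOf σ)).map fun j =>
      prodList V ((σ.zip x).filterMap fun p => if p.1 = j then some p.2 else none))
  else 0

/-- `F_σ` as a linear endomorphism of `T(V)`. -/
def FL (σ : List ℕ) : TW k V →ₗ[k] TW k V :=
  Finsupp.lsum k fun x => LinearMap.toSpanSingleton k _ (FW k V σ x)

/-- Composition of surjections `σ ∘ τ` (in one-line notation). -/
def compWord (σ τ : List ℕ) : List ℕ := τ.map fun j => σ.getD (j - 1) 0


lemma maxOf_cons (b : ℕ) (t : List ℕ) : maxOf (b :: t) = max b (maxOf t) := rfl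

lemma le_maxOf {s : List ℕ} {a : ℕ} (h : a ∈ s) : a ≤ maxOf s := by
  induction s with
  | nil => simp at h
  | cons b t ih =>
    rw [maxOf_cons]
    rcases List.mem_cons.1 h with h | h
    · subst h; exact le_max_left _ _
    · exact le_trans (ih h) (le_max_right _ _)

lemma maxOf_le {s : List ℕ} {n : ℕ} (h : ∀ a ∈ s, a ≤ n) : maxOf s ≤ n := by
  induction s with
  | nil => simp [maxOf]
  | cons b t ih =>
    rw [maxOf_cons]
    exact max_le (h b (by simp)) (ih fun a ha => h a (by simp [ha]))

lemma packed_getD {s : List ℕ} (hs : IsPacked s) {i : ℕ} (hi : i < s.length) :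
    1 ≤ s.getD i 0 ∧ s.getD i 0 ≤ maxOf s := by
  rw [List.getD_eq_getElem s 0 hi]
  have hm : s[i] ∈ s := List.getElem_mem hi
  refine ⟨?_, le_maxOf hm⟩
  rcases Nat.eq_zero_or_pos s[i] with h | h
  · exact absurd (h ▸ hm) hs.1
  · exact h

lemma maxOf_compWord {σ τ : List ℕ} (hσ : IsPacked σ) (hτ : IsPacked τ)
    (h : maxOf τ = σ.length) : maxOf (compWord σ τ) = maxOf σ := by
  apply le_antisymm
  · apply maxOf_le
    intro a ha
    rcases List.mem_map.1 ha with ⟨j, _, rfl⟩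
    rcases Nat.lt_or_ge (j - 1) σ.length with hj | hj
    · rw [List.getD_eq_getElem σ 0 hj]
      exact le_maxOf (List.getElem_mem hj)
    · rw [List.getD_eq_default σ 0 hj]; exact Nat.zero_le _
  · rcases Nat.eq_zero_or_pos (maxOf σ) with h0 | h0
    · simp [h0]
    · obtain ⟨m, hm, hσm⟩ := List.getElem_of_mem (hσ.2 _ h0 le_rfl)
      have hmem : (m + 1) ∈ τ := hτ.2 (m + 1) (Nat.succ_pos m) (by omega)
      have : σ.getD m 0 ∈ compWord σ τ := by
        apply List.mem_map.2 ⟨m + 1, hmem, by simp⟩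
      rw [List.getD_eq_getElem σ 0 hm, hσm] at this
      exact le_maxOf this

lemma filterMap_zip_ne_nil {α : Type*} {l : List ℕ} {x : List α} {j : ℕ}
    (hlen : l.length = x.length) (h : j ∈ l) :
    ((l.zip x).filterMap fun p => if p.1 = j then some p.2 else none) ≠ [] := by
  obtain ⟨m, hm, hjm⟩ := List.getElem_of_mem h
  intro hnil
  rw [List.filterMap_eq_nil_iff] at hnil
  have hmz : m < (l.zip x).length := by rw [List.length_zip]; omega
  have hmem : (l[m], x[m]'(by omega)) ∈ l.zip x := by
    have := List.getElem_zip (l := l) (l' := x) (i := m) (h := hmz)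
    rw [← this]; exact List.getElem_mem hmz
  have := hnil _ hmem
  simp only [hjm, if_pos rfl] at this
  exact Option.some_ne_none _ this

lemma map_filterMap_zip {α β : Type*} (h : α → β) (l : List ℕ) (x : List α)
    (j : ℕ) :
    (((l.zip x).filterMap fun p => if p.1 = j then some p.2 else none).map h)
      = ((l.zip (x.map h)).filterMap fun p => if p.1 = j then some p.2 else none) := by
  induction l generalizing x with
  | nil => simp
  | cons a l ih =>
    cases x with
    | nil => simp
    | cons b x =>
      by_cases hP : a = j <;>
        simp only [List.zip_cons_cons, List.filterMap_cons, if_pos, if_neg, hP,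
          if_true, if_false, List.map_cons, ih]

lemma prod_filterMap_zip {M : Type*} [CommMonoid M] (j : ℕ) :
    ∀ (l : List ℕ) (x : List M), l.length = x.length →
    ((l.zip x).filterMap fun p => if p.1 = j then some p.2 else none).prod
      = ∏ i ∈ Finset.range l.length, if l.getD i 0 = j then x.getD i 1 else 1 := by
  intro l
  induction l with
  | nil => intro x h; simp
  | cons a l ih =>
    intro x h
    cases x with
    | nil => simp at h
    | cons b x =>
      have h' : l.length = x.length := by simpa using h
      simp only [List.zip_cons_cons, List.filterMap_cons, List.length_cons]
      rw [Finset.prod_range_succ']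
      simp only [List.getD_cons_succ, List.getD_cons_zero]
      rw [← ih x h']
      by_cases hP : a = j
      · simp only [if_pos hP, List.prod_cons, mul_comm]
      · simp only [if_neg hP, mul_one]

lemma coe_foldl : ∀ (t : List V) (a : V),
    ((t.foldl (· * ·) a : V) : WithOne V)
      = (a : WithOne V) * (t.map (fun v : V => (v : WithOne V))).prod := by
  intro t
  induction t with
  | nil => intro a; simp
  | cons b t ih =>
    intro a
    simp only [List.foldl_cons, List.map_cons, List.prod_cons]
    rw [ih (a * b), WithOne.coe_mul, mul_assoc]

lemma coe_prodList {l : List V} (h : l ≠ []) :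
    ((prodList V l : V) : WithOne V) = (l.map (fun v : V => (v : WithOne V))).prod := by
  cases l with
  | nil => exact absurd rfl h
  | cons a t =>
    show ((t.foldl (· * ·) a : V) : WithOne V) = _
    rw [coe_foldl, List.map_cons, List.prod_cons]

lemma FL_sg (σ : List ℕ) (x : List V) : FL k V σ (sg x) = FW k V σ x := by
  rw [FL, sg, Finsupp.lsum_single, LinearMap.toSpanSingleton_apply, one_smul]

lemma FL_ext {f g : TW k V →ₗ[k] TW k V} (h : ∀ x : List V, f (sg x) = g (sg x)) :
    f = g := by
  apply Finsupp.lhom_ext'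
  intro x
  apply LinearMap.ext_ring
  simpa [sg] using h x

lemma getD_map' {α β : Type*} (f : α → β) (l : List α) {i : ℕ} (h : i < l.length)
    (d : β) (d' : α) : (l.map f).getD i d = f (l.getD i d') := by
  rw [List.getD_eq_getElem _ d (by simpa using h), List.getElem_map,
    List.getD_eq_getElem _ d' h]

lemma per_letter (σ τ : List ℕ) (x : List V) (hσ : IsPacked σ) (hτ : IsPacked τ)
    (hx : x.length = τ.length) (hm : maxOf τ = σ.length) (j : ℕ)
    (hj1 : 1 ≤ j) (hj2 : j ≤ maxOf σ) :
    prodList V (((σ.zip ((List.range' 1 (maxOf τ)).map fun j' =>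
        prodList V ((τ.zip x).filterMap fun p => if p.1 = j' then some p.2 else none))).filterMap
        fun p => if p.1 = j then some p.2 else none))
      = prodList V (((compWord σ τ).zip x).filterMap
          fun p => if p.1 = j then some p.2 else none) := by
  set y : List V := (List.range' 1 (maxOf τ)).map fun j' =>
      prodList V ((τ.zip x).filterMap fun p => if p.1 = j' then some p.2 else none) with hy
  have hylen : y.length = maxOf τ := by simp [hy]
  have hclen : (compWord σ τ).length = τ.length := by simp [compWord]
  -- nonemptiness of the two filterMap lists
  have hjσ : j ∈ σ := hσ.2 j (by omega) hj2
  have hne1 : ((σ.zip y).filterMap fun p => if p.1 = j then some p.2 else none) ≠ [] :=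
    filterMap_zip_ne_nil (by omega) hjσ
  obtain ⟨m, hmlt, hσm⟩ := List.getElem_of_mem hjσ
  have hm1τ : m + 1 ∈ τ := hτ.2 (m + 1) (Nat.succ_pos m) (by omega)
  have hjc : j ∈ compWord σ τ := by
    refine List.mem_map.2 ⟨m + 1, hm1τ, ?_⟩
    simp only [Nat.add_sub_cancel]
    rw [List.getD_eq_getElem σ 0 hmlt, hσm]
  have hne2 : (((compWord σ τ).zip x).filterMap fun p => if p.1 = j then some p.2 else none) ≠ [] :=
    filterMap_zip_ne_nil (by omega) hjc
  -- pass to WithOne V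
  apply WithOne.coe_inj.1
  set X : List (WithOne V) := x.map (fun v : V => (v : WithOne V)) with hX
  have hXlen : X.length = x.length := by simp [hX]
  -- each entry of Y as a product
  have hKey : ∀ m' : ℕ, m' < σ.length →
      (y.map (fun v : V => (v : WithOne V))).getD m' 1 = ∏ i ∈ Finset.range τ.length,
        (if τ.getD i 0 = 1 + m' then X.getD i 1 else 1) := by
    intro m' hmK
    have hmy : m' < y.length := by omega
    have hmr : m' < (List.range' 1 (maxOf τ)).length := by simp; omega
    rw [getD_map' (fun v : V => (v : WithOne V)) y hmy 1 0]
    have hym : y.getD m' 0 = prodList V ((τ.zip x).filterMap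
        fun p => if p.1 = 1 + m' then some p.2 else none) := by
      rw [hy, getD_map' _ _ hmr 0 0,
        List.getD_eq_getElem _ 0 hmr, List.getElem_range']
      norm_num
    rw [hym]
    have hmem : 1 + m' ∈ τ := hτ.2 _ (by omega) (by omega)
    rw [coe_prodList V (filterMap_zip_ne_nil hx.symm hmem), map_filterMap_zip,
      prod_filterMap_zip _ τ X (by omega)]
  calc ((prodList V ((σ.zip y).filterMap fun p => if p.1 = j then some p.2 else none) : V)
        : WithOne V)
      = (((σ.zip y).filterMap fun p => if p.1 = j then some p.2 else none).map
          (fun v : V => (v : WithOne V))).prod := coe_prodList V hne1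
    _ = ((σ.zip (y.map (fun v : V => (v : WithOne V)))).filterMap fun p => if p.1 = j then some p.2 else none).prod := by
        rw [map_filterMap_zip]
    _ = ∏ m' ∈ Finset.range σ.length, (if σ.getD m' 0 = j then
          (y.map (fun v : V => (v : WithOne V))).getD m' 1 else 1) :=
        prod_filterMap_zip _ σ (y.map (fun v : V => (v : WithOne V))) (by simp; omega)
    _ = ∏ m' ∈ Finset.range σ.length, ∏ i ∈ Finset.range τ.length,
          (if σ.getD m' 0 = j ∧ τ.getD i 0 = 1 + m' then X.getD i 1 else 1) := by
        refine Finset.prod_congr rfl fun m' hm' => ?_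
        rw [hKey m' (Finset.mem_range.1 hm')]
        by_cases hc : σ.getD m' 0 = j
        · rw [if_pos hc]
          exact Finset.prod_congr rfl fun i _ => by simp only [hc, true_and]
        · rw [if_neg hc]
          simp only [hc, false_and, if_false, Finset.prod_const_one]
    _ = ∏ i ∈ Finset.range τ.length, ∏ m' ∈ Finset.range σ.length,
          (if σ.getD m' 0 = j ∧ τ.getD i 0 = 1 + m' then X.getD i 1 else 1) :=
        Finset.prod_comm
    _ = ∏ i ∈ Finset.range τ.length,
          (if σ.getD (τ.getD i 0 - 1) 0 = j then X.getD i 1 else 1) := by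
        refine Finset.prod_congr rfl fun i hi => ?_
        have hi' : i < τ.length := Finset.mem_range.1 hi
        obtain ⟨ht1, ht2⟩ := packed_getD hτ hi'
        refine (Finset.prod_eq_single (τ.getD i 0 - 1) ?_ ?_).trans ?_
        · intro b _ hb
          rw [if_neg]
          rintro ⟨-, h2⟩
          omega
        · intro habs
          exact absurd (Finset.mem_range.2 (by omega)) habs
        · have : τ.getD i 0 = 1 + (τ.getD i 0 - 1) := by omega
          rw [← this]
          by_cases hc : σ.getD (τ.getD i 0 - 1) 0 = j
          · simp [hc]
          · simp [hc]
    _ = ∏ i ∈ Finset.range (compWord σ τ).length,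
          (if (compWord σ τ).getD i 0 = j then X.getD i 1 else 1) := by
        rw [hclen]
        refine Finset.prod_congr rfl fun i hi => ?_
        have hi' : i < τ.length := Finset.mem_range.1 hi
        congr 2
        rw [List.getD_eq_getElem _ 0 (by omega : i < (compWord σ τ).length)]
        simp only [compWord, List.getElem_map]
        rw [List.getD_eq_getElem τ 0 hi']
    _ = (((compWord σ τ).zip X).filterMap fun p => if p.1 = j then some p.2 else none).prod :=
        (prod_filterMap_zip _ (compWord σ τ) X (by omega)).symm
    _ = ((((compWord σ τ).zip x).filterMap fun p => if p.1 = j then some p.2 else none).map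
          (fun v : V => (v : WithOne V))).prod := by rw [map_filterMap_zip]
    _ = ((prodList V (((compWord σ τ).zip x).filterMap
          fun p => if p.1 = j then some p.2 else none) : V) : WithOne V) :=
        (coe_prodList V hne2).symm

/-- For packed words (surjections) `σ ∈ Surj_k`, `τ ∈ Surj_l`:
`F_σ ∘ F_τ = F_{σ∘τ}` if `max(τ) = k`, and `F_σ ∘ F_τ = 0` otherwise. -/
theorem F_comp (σ τ : List ℕ) (hσ : IsPacked σ) (hτ : IsPacked τ) :
    (maxOf τ = σ.length → FL k V σ ∘ₗ FL k V τ = FL k V (compWord σ τ)) ∧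
    (maxOf τ ≠ σ.length → FL k V σ ∘ₗ FL k V τ = 0) := by
  have key : ∀ x : List V, FL k V σ (FW k V τ x)
      = if maxOf τ = σ.length then FW k V (compWord σ τ) x else 0 := by
    intro x
    by_cases hx : x.length = τ.length
    · have hFWτ : FW k V τ x = sg ((List.range' 1 (maxOf τ)).map fun j' =>
          prodList V ((τ.zip x).filterMap fun p => if p.1 = j' then some p.2 else none)) := by
        rw [FW, if_pos hx]
      rw [hFWτ, FL_sg]
      have hylen : ((List.range' 1 (maxOf τ)).map fun j' =>
          prodList V ((τ.zip x).filterMap fun p => if p.1 = j' then some p.2 else none)).length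
          = maxOf τ := by simp
      by_cases hm : maxOf τ = σ.length
      · rw [if_pos hm, FW, if_pos (by omega), FW,
          if_pos (by simp [compWord]; omega)]
        congr 1
        rw [maxOf_compWord hσ hτ hm]
        refine List.map_congr_left fun j hj => ?_
        rw [List.mem_range'_1] at hj
        exact per_letter V σ τ x hσ hτ hx hm j hj.1 (by omega)
      · rw [if_neg hm, FW, if_neg (by omega)]
    · have h1 : FW k V τ x = 0 := by rw [FW, if_neg hx]
      have h2 : FW k V (compWord σ τ) x = 0 := by
        rw [FW, if_neg (by simp [compWord]; omega)]
      rw [h1, map_zero, h2]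
      simp
  constructor
  · intro h
    refine FL_ext k V fun x => ?_
    rw [LinearMap.comp_apply, FL_sg, key x, if_pos h, FL_sg]
  · intro h
    refine FL_ext k V fun x => ?_
    rw [LinearMap.comp_apply, FL_sg, key x, if_neg h, LinearMap.zero_apply]
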